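/- arXiv:1702.08820 — 6 statements merged into one kernel-verified Lean document; each statement's English description precedes it below -/
import Mathlib

section
/- The piecewise linear Jensen approximation is a lower bound for the complementary first order loss function: for every x ∈ ℝ, f(x) = Σ_{i=1}^{W+1} p_i · max(x − X_i, 0) ≤ L̂(x, ω) = E[max(x − ω, 0)]. -/
open MeasureTheory Finset

/-!
Jensen's inequality for the convex function `y ↦ max (x - y) 0`, applied on each cell `ω ∈ Ωᵢ`
with respect to the conditional law, bounds `pᵢ · max (x - Xᵢ) 0` by the contribution of that cell
to `E[max (x - ω) 0]`; summing over the cells gives the claim.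
-/

section

variable {α : Type*} [MeasurableSpace α] {μ : Measure α}

theorem max_integral_le_integral_max (g : α → ℝ) :
    max (∫ a, g a ∂μ) 0 ≤ ∫ a, max (g a) 0 ∂μ := by
  have hpos : 0 ≤ ∫ a, max (g a) 0 ∂μ := integral_nonneg fun a => le_max_right _ _
  refine max_le ?_ hpos
  by_cases hg : Integrable g μ
  · exact integral_mono hg hg.pos_part fun a => le_max_left _ _
  · rwa [integral_undef hg]

theorem measureReal_mul_max_sub_div_le_setIntegral_max {X : α → ℝ} {s : Set α}
    (hX : IntegrableOn X s μ) (x : ℝ) :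
    μ.real s * max (x - (∫ a in s, X a ∂μ) / μ.real s) 0 ≤ ∫ a in s, max (x - X a) 0 ∂μ := by
  rcases eq_or_ne (μ.real s) 0 with hs | hs
  · rw [hs, zero_mul]
    exact integral_nonneg fun a => le_max_right _ _
  have hfin : μ s ≠ ⊤ := fun h => hs (by simp [measureReal_def, h])
  have hmean : μ.real s * max (x - (∫ a in s, X a ∂μ) / μ.real s) 0
      = max (∫ a in s, (x - X a) ∂μ) 0 := by
    rw [integral_sub (integrableOn_const (C := x) hfin) hX, setIntegral_const, smul_eq_mul,
      mul_max_of_nonneg _ _ measureReal_nonneg, mul_zero, mul_sub, mul_div_cancel₀ _ hs]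
  rw [hmean]
  exact max_integral_le_integral_max _

end

theorem jensen_approx_le_complementary_loss_general
    {Ω : Type*} [MeasurableSpace Ω] (μ : Measure Ω) [IsProbabilityMeasure μ]
    (X : Ω → ℝ) (hXmeas : Measurable X) (hXint : Integrable X μ)
    (W : ℕ)
    (S : Fin (W + 1) → Set ℝ)
    (hSmeas : ∀ i, MeasurableSet (S i))
    (hSdisj : Pairwise (Function.onFun Disjoint S))
    (hSunion : (⋃ i, S i) = Set.univ)
    (p : Fin (W + 1) → ℝ) (hp : ∀ i, p i = (μ (X ⁻¹' S i)).toReal)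
    (Xm : Fin (W + 1) → ℝ)
    (hXm : ∀ i, Xm i = (∫ a in X ⁻¹' S i, X a ∂μ) / p i)
    (f : ℝ → ℝ) (hf : ∀ x, f x = ∑ i, p i * max (x - Xm i) 0) :
    ∀ x : ℝ, f x ≤ ∫ a, max (x - X a) 0 ∂μ := by
  intro x
  have hcover : (⋃ i, X ⁻¹' S i) = Set.univ := by
    rw [← Set.preimage_iUnion, hSunion, Set.preimage_univ]
  have hloss : Integrable (fun a => max (x - X a) 0) μ :=
    ((integrable_const x).sub hXint).pos_part
  rw [hf x, ← setIntegral_univ, ← hcover,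
    integral_iUnion_fintype (fun i => hXmeas (hSmeas i))
      (fun i j hij => (hSdisj hij).preimage X) (fun i => hloss.integrableOn)]
  gcongr with i
  rw [hXm i, hp i, ← measureReal_def]
  exact measureReal_mul_max_sub_div_le_setIntegral_max hXint.integrableOn x

/-- The piecewise linear Jensen approximation is a lower bound for
the complementary first order loss function: for every `x`,
`f x = ∑ i, p i * max (x - X i) 0 ≤ E[max (x - ω) 0]`. -/
theorem jensen_approx_le_complementary_loss
    {Ω : Type*} [MeasurableSpace Ω] (μ : Measure Ω) [IsProbabilityMeasure μ]
    (X : Ω → ℝ) (hXmeas : Measurable X) (hXint : Integrable X μ)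
    (W : ℕ) (hW : 1 ≤ W)
    (S : Fin (W + 1) → Set ℝ)
    (hSmeas : ∀ i, MeasurableSet (S i))
    (hSinterval : ∀ i, (S i).OrdConnected)
    (hSdisj : Pairwise (Function.onFun Disjoint S))
    (hSunion : (⋃ i, S i) = Set.univ)
    (hSord : ∀ i j : Fin (W + 1), i < j → ∀ x ∈ S i, ∀ y ∈ S j, x ≤ y)
    (p : Fin (W + 1) → ℝ) (hp : ∀ i, p i = (μ (X ⁻¹' S i)).toReal)
    (hppos : ∀ i, 0 < p i)
    (Xm : Fin (W + 1) → ℝ)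
    (hXm : ∀ i, Xm i = (∫ a in X ⁻¹' S i, X a ∂μ) / p i)
    (f : ℝ → ℝ) (hf : ∀ x, f x = ∑ i, p i * max (x - Xm i) 0) :
    ∀ x : ℝ, f x ≤ ∫ a, max (x - X a) 0 ∂μ :=
  jensen_approx_le_complementary_loss_general μ X hXmeas hXint W S hSmeas hSdisj hSunion p hp Xm hXm
    f hf
end

section
/- Let ω be a real-valued random variable with E|ω| < ∞ and let x ∈ ℝ satisfy P(ω = x) = 0. Then the complementary first order loss function y ↦ L̂(y, ω) is differentiable at x, with derivative equal to P(ω ≤ x). -/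
/-!
Each integrand `y ↦ max (y - ω) 0` is 1-Lipschitz, so differentiation under the integral sign
is justified by dominated convergence with the constant bound 1. Away from its kink at `y = ω` the
integrand has derivative `1` if `ω < y` and `0` if `y < ω`; since `ω = x` is a null event, the
derivative at `x` is a.e. the indicator of `{ω ≤ x}`, whose expectation is `P(ω ≤ x)`.
-/

theorem lipschitzWith_max_sub_const_zero (c : ℝ) : LipschitzWith 1 fun y : ℝ => max (y - c) 0 :=
  (IsometryEquiv.subRight c).isometry.lipschitz.max_const 0

theorem hasDerivAt_max_sub_const_zero {c x : ℝ} (h : c ≠ x) :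
    HasDerivAt (fun y : ℝ => max (y - c) 0) (if c ≤ x then 1 else 0) x := by
  rcases h.lt_or_gt with hcx | hxc
  · rw [if_pos hcx.le]
    refine ((hasDerivAt_id x).sub_const c).congr_of_eventuallyEq ?_
    filter_upwards [Ioi_mem_nhds hcx] with y hy
    exact max_eq_left (sub_nonneg.2 hy.le)
  · rw [if_neg hxc.not_ge]
    refine (hasDerivAt_const x (0 : ℝ)).congr_of_eventuallyEq ?_
    filter_upwards [Iio_mem_nhds hxc] with y hy
    exact max_eq_right (sub_nonpos.2 hy.le)

open MeasureTheory

theorem complementary_loss_hasDerivAt_general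
    {Ω : Type*} [MeasurableSpace Ω] (μ : Measure Ω) [IsProbabilityMeasure μ]
    (X : Ω → ℝ) (hXint : Integrable X μ)
    (x : ℝ) (hx : μ {a | X a = x} = 0) :
    HasDerivAt (fun y : ℝ => ∫ a, max (y - X a) 0 ∂μ) (μ {a | X a ≤ x}).toReal x := by
  have hX : AEMeasurable X μ := hXint.aemeasurable
  have hF_meas (y : ℝ) : AEStronglyMeasurable (fun a => max (y - X a) 0) μ :=
    ((aemeasurable_const.sub hX).max aemeasurable_const).aestronglyMeasurable
  have hF_lip (a : Ω) :
      LipschitzOnWith (Real.nnabs 1) (fun y : ℝ => max (y - X a) 0) Set.univ := by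
    rw [map_one]
    exact (lipschitzWith_max_sub_const_zero (X a)).lipschitzOnWith
  set s := {a | X a ≤ x}
  have hs : NullMeasurableSet s μ := nullMeasurableSet_le hX aemeasurable_const
  have hF_diff : ∀ᵐ a ∂μ, HasDerivAt (fun y : ℝ => max (y - X a) 0) (s.indicator 1 a) x := by
    filter_upwards [measure_eq_zero_iff_ae_notMem.1 hx] with a ha
    simpa [s, Set.indicator_apply] using hasDerivAt_max_sub_const_zero ha
  have h_integral : ∫ a, s.indicator 1 a ∂μ = (μ s).toReal := by
    simp [integral_indicator₀ hs, measureReal_def]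
  rw [← h_integral]
  exact (hasDerivAt_integral_of_dominated_loc_of_lip Filter.univ_mem (.of_forall hF_meas)
    ((integrable_const x).sub hXint).pos_part (aestronglyMeasurable_const.indicator₀ hs)
    (.of_forall hF_lip) (integrable_const 1) hF_diff).2

/-- If `P(ω = x) = 0`, then the complementary first order loss
function `y ↦ E[max (y - ω) 0]` is differentiable at `x` with derivative
`P(ω ≤ x)`. -/
theorem complementary_loss_hasDerivAt
    {Ω : Type*} [MeasurableSpace Ω] (μ : Measure Ω) [IsProbabilityMeasure μ]
    (X : Ω → ℝ) (hXmeas : Measurable X) (hXint : Integrable X μ)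
    (x : ℝ) (hx : μ {a | X a = x} = 0) :
    HasDerivAt (fun y : ℝ => ∫ a, max (y - X a) 0 ∂μ) (μ {a | X a ≤ x}).toReal x :=
  complementary_loss_hasDerivAt_general μ X hXint x hx
end

section
/- Let K ≥ 0, let f : ℝ → ℝ be a measurable K-convex function, and let d be a real-valued random variable such that for every y ∈ ℝ the random variable f(y − d) is integrable. Then the function g : ℝ → ℝ defined by g(y) := E[f(y − d)] is K-convex. -/
open MeasureTheory

/-- `f` is `K`-convex: for all `y`, `z ≥ 0` and `b > 0`,
`K + f (y + z) ≥ f y + (z / b) * (f y - f (y - b))`. -/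
def KConvex (K : ℝ) (f : ℝ → ℝ) : Prop :=
  ∀ y z b : ℝ, 0 ≤ z → 0 < b → f y + (z / b) * (f y - f (y - b)) ≤ K + f (y + z)

theorem KConvex.comp_sub_const {K : ℝ} {f : ℝ → ℝ} (hf : KConvex K f) (c : ℝ) :
    KConvex K (fun y => f (y - c)) := by
  intro y z b hz hb
  have h := hf (y - c) z b hz hb
  rwa [sub_right_comm, sub_add_eq_add_sub] at h

theorem KConvex.integral {Ω : Type*} [MeasurableSpace Ω] {μ : Measure Ω} [IsProbabilityMeasure μ]
    {K : ℝ} {f : Ω → ℝ → ℝ} (hf : ∀ ω, KConvex K (f ω))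
    (hint : ∀ y, Integrable (fun ω => f ω y) μ) :
    KConvex K (fun y => ∫ ω, f ω y ∂μ) := by
  intro y z b hz hb
  have hslope : Integrable (fun ω => (z / b) * (f ω y - f ω (y - b))) μ :=
    ((hint y).sub (hint (y - b))).const_mul _
  calc (∫ ω, f ω y ∂μ) + (z / b) * ((∫ ω, f ω y ∂μ) - ∫ ω, f ω (y - b) ∂μ)
      = ∫ ω, (f ω y + (z / b) * (f ω y - f ω (y - b))) ∂μ := by
        rw [integral_add (hint y) hslope, integral_const_mul,
          integral_sub (hint y) (hint (y - b))]
    _ ≤ ∫ ω, (K + f ω (y + z)) ∂μ :=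
        integral_mono ((hint y).add hslope) ((integrable_const K).add (hint (y + z)))
          fun ω => hf ω y z b hz hb
    _ = K + ∫ ω, f ω (y + z) ∂μ := by
        rw [integral_add (integrable_const K) (hint (y + z)), integral_const, probReal_univ,
          one_smul]

theorem kConvex_expectation_general
    {Ω : Type*} [MeasurableSpace Ω] (μ : Measure Ω) [IsProbabilityMeasure μ]
    (K : ℝ) (f : ℝ → ℝ) (hf : KConvex K f)
    (d : Ω → ℝ)
    (hint : ∀ y : ℝ, Integrable (fun a => f (y - d a)) μ) :
    KConvex K (fun y => ∫ a, f (y - d a) ∂μ) :=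
  KConvex.integral (fun a => hf.comp_sub_const (d a)) hint

/-- If `f` is a measurable `K`-convex function (`K ≥ 0`) and `d` is a
real-valued random variable such that `f (y - d)` is integrable for every `y`, then
`g y := E[f (y - d)]` is `K`-convex. -/
theorem kConvex_expectation
    {Ω : Type*} [MeasurableSpace Ω] (μ : Measure Ω) [IsProbabilityMeasure μ]
    (K : ℝ) (hK : 0 ≤ K) (f : ℝ → ℝ) (hfmeas : Measurable f) (hf : KConvex K f)
    (d : Ω → ℝ) (hdmeas : Measurable d)
    (hint : ∀ y : ℝ, Integrable (fun a => f (y - d a)) μ) :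
    KConvex K (fun y => ∫ a, f (y - d a) ∂μ) :=
  kConvex_expectation_general μ K f hf d hint
end

section
/- Let K ≥ 0 and let f : ℝ → ℝ be K-convex. Suppose S ∈ ℝ is a global minimizer of f and s < S satisfies f(s) = K + f(S). Then for every y < s one has f(y) ≥ f(s) = K + f(S); consequently no point strictly to the left of s attains a value strictly below K + f(S). -/
/-- If `f` is `K`-convex (`K ≥ 0`), `S` is a global minimizer of `f`,
and `s < S` satisfies `f s = K + f S`, then `f y ≥ f s = K + f S` for every `y < s`;
so no point strictly to the left of `s` attains a value strictly below `K + f S`. -/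
theorem kConvex_left_of_reorder_point
    (K : ℝ) (hK : 0 ≤ K) (f : ℝ → ℝ) (hf : KConvex K f)
    (S : ℝ) (hS : ∀ y : ℝ, f S ≤ f y)
    (s : ℝ) (hsS : s < S) (hfs : f s = K + f S) :
    ∀ y : ℝ, y < s → f s ≤ f y := by
  intro y hys
  have h := hf s (S - s) (s - y) (by linarith) (by linarith)
  have h1 : s + (S - s) = S := by ring
  have h2 : s - (s - y) = y := by ring
  rw [h1, h2, ← hfs] at h
  have hpos : 0 < (S - s) / (s - y) := div_pos (by linarith) (by linarith)
  nlinarith [h, hpos]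
end

section
/- Let K ≥ 0 and let f : ℝ → ℝ be K-convex. Suppose S ∈ ℝ is a global minimizer of f and s < S satisfies f(s) = K + f(S). Then for every y with s ≤ y ≤ S one has f(y) ≤ K + f(S). -/
/-- If `f` is `K`-convex (`K ≥ 0`), `S` is a global minimizer of `f`,
and `s < S` satisfies `f s = K + f S`, then `f y ≤ K + f S` for every `s ≤ y ≤ S`. -/
theorem kConvex_between_reorder_and_orderUpTo
    (K : ℝ) (hK : 0 ≤ K) (f : ℝ → ℝ) (hf : KConvex K f)
    (S : ℝ) (hS : ∀ y : ℝ, f S ≤ f y)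
    (s : ℝ) (hsS : s < S) (hfs : f s = K + f S) :
    ∀ y : ℝ, s ≤ y → y ≤ S → f y ≤ K + f S := by
  intro y hsy hyS
  rcases eq_or_lt_of_le hsy with h | h
  · rw [← h, hfs]
  · have hb : (0:ℝ) < y - s := by linarith
    have hz : (0:ℝ) ≤ S - y := by linarith
    have key := hf y (S - y) (y - s) hz hb
    have hys : y - (y - s) = s := by ring
    have hyz : y + (S - y) = S := by ring
    rw [hys, hyz, hfs] at key
    -- key : f y + ((S-y)/(y-s)) * (f y - (K + f S)) ≤ K + f S
    set t : ℝ := (S - y) / (y - s) with ht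
    have htn : 0 ≤ t := div_nonneg hz (le_of_lt hb)
    by_contra hc
    push_neg at hc
    nlinarith [mul_nonneg htn (le_of_lt (sub_pos.mpr hc))]
end

section
/- Let K ≥ 0 and let f : ℝ → ℝ be K-convex with global minimizer S. Then for all x, y with S ≤ x ≤ y, one has f(x) ≤ K + f(y). -/
/-- If `f` is `K`-convex (`K ≥ 0`) with global minimizer `S`, then for
all `x, y` with `S ≤ x ≤ y`, one has `f x ≤ K + f y`. -/
theorem kConvex_right_of_minimizer
    (K : ℝ) (hK : 0 ≤ K) (f : ℝ → ℝ) (hf : KConvex K f)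
    (S : ℝ) (hS : ∀ y : ℝ, f S ≤ f y) :
    ∀ x y : ℝ, S ≤ x → x ≤ y → f x ≤ K + f y := by
  intro x y hSx hxy
  rcases eq_or_lt_of_le hSx with h | h
  · calc f x = f S := by rw [h]
    _ ≤ f y := hS y
    _ ≤ K + f y := by linarith
  · have hb : 0 < x - S := by linarith
    have hz : 0 ≤ y - x := by linarith
    have key := hf x (y - x) (x - S) hz hb
    have h1 : x - (x - S) = S := by ring
    rw [h1] at key
    have h2 : x + (y - x) = y := by ring
    rw [h2] at key
    have h3 : 0 ≤ (y - x) / (x - S) := div_nonneg hz hb.le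
    have h4 : 0 ≤ f x - f S := by linarith [hS x]
    nlinarith
end
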